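/- Let r > d > 0, (x₀,y₀) ∈ (0,1)², x₀ ≠ y₀. Then μ ≠ 0, and for all u ∈ [0, s₀): exp(∫₀^u R(x_α,y_α)dα) = [(λ/μ + 1 − 1/μ)/((λ/μ)e^{ru} + e^{du} − 1/μ)] · [(λ/μ + 1 + 1/μ)/((λ/μ)e^{ru} + e^{du} + 1/μ)] · [((r/d)(λ/μ) + 1)/((r/d)(λ/μ)e^{ru} + e^{du})] · e^{(r+d)u}. -/

import Mathlib

/-!
Write `A s = λ e^{rs} + μ e^{ds}` (`expComb λ μ r d s`) and `B = A'` (`expComb (λ r) (μ d) r d`),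
so that `x_s = B / (d (A + 1))` and `y_s = B / (d (A - 1))`. Since `B' = (r + d) B - r d A`,
the integrand is a sum of logarithmic derivatives,
`R(x_s, y_s) = (r + d) - B'/B - A'/(A - 1) - A'/(A + 1)`, so `exp ∫₀ᵘ R` is `e^{(r+d)u}` times
the ratios of `A - 1`, `A + 1` and `B` between `0` and `u`; dividing by `μ` only rescales `A`.

This needs `B` and `A ∓ 1` not to vanish on `[0, u]`. Multiplied by `(x₀ - y₀)(r - d)` they become
combinations of `e^{rs}` and `e^{ds}` whose signs are fixed as long as
`r (x₀ + y₀ - 2 x₀ y₀) e^{rs} < (r (x₀ + y₀) - 2 d x₀ y₀) e^{ds}`, and this is exactly `s < s₀`.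
-/

/-- The coefficient `Q(x,y) = (r+d)x − r/2 − (r/2)(x/y) − d·x²`. -/
noncomputable def Qfun (r d x y : ℝ) : ℝ :=
  (r + d) * x - r / 2 - r / 2 * (x / y) - d * x ^ 2

/-- The coefficient `R(x,y) = r/(2x) + r/(2y) − d·x − d·y`. -/
noncomputable def Rfun (r d x y : ℝ) : ℝ :=
  r / (2 * x) + r / (2 * y) - d * x - d * y

/-- The integration constant `λ = (2d·x₀y₀ − d(x₀+y₀))/((x₀−y₀)(r−d))`. -/
noncomputable def lamOf (r d x₀ y₀ : ℝ) : ℝ :=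
  (2 * d * x₀ * y₀ - d * (x₀ + y₀)) / ((x₀ - y₀) * (r - d))

/-- The integration constant `μ = (−2d·x₀y₀ + r(x₀+y₀))/((x₀−y₀)(r−d))`. -/
noncomputable def muOf (r d x₀ y₀ : ℝ) : ℝ :=
  (-(2 * d * x₀ * y₀) + r * (x₀ + y₀)) / ((x₀ - y₀) * (r - d))

/-- The characteristic curve `x_s = (λre^{rs} + μde^{ds})/(d(λe^{rs} + μe^{ds} + 1))`. -/
noncomputable def xChar (r d lam mu s : ℝ) : ℝ :=
  (lam * r * Real.exp (r * s) + mu * d * Real.exp (d * s))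
    / (d * (lam * Real.exp (r * s) + mu * Real.exp (d * s) + 1))

/-- The characteristic curve `y_s = (λre^{rs} + μde^{ds})/(d(λe^{rs} + μe^{ds} − 1))`. -/
noncomputable def yChar (r d lam mu s : ℝ) : ℝ :=
  (lam * r * Real.exp (r * s) + mu * d * Real.exp (d * s))
    / (d * (lam * Real.exp (r * s) + mu * Real.exp (d * s) - 1))

/-- The time `s₀ = log((x₀ + y₀ − 2x₀y₀)/(x₀ + y₀ − 2(d/r)x₀y₀))/(d − r)`. -/
noncomputable def s0Of (r d x₀ y₀ : ℝ) : ℝ :=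
  Real.log ((x₀ + y₀ - 2 * x₀ * y₀) / (x₀ + y₀ - 2 * (d / r) * x₀ * y₀)) / (d - r)

open MeasureTheory Real Set intervalIntegral

theorem ContinuousOn.div_pos_of_ne_zero {f : ℝ → ℝ} {a b : ℝ} (hf : ContinuousOn f (uIcc a b))
    (h0 : ∀ x ∈ uIcc a b, f x ≠ 0) : 0 < f b / f a := by
  have h0_notMem : (0 : ℝ) ∉ uIcc (f a) (f b) := fun h => by
    obtain ⟨x, hx, hfx⟩ := intermediate_value_uIcc hf h
    exact h0 x hx hfx
  rw [mem_uIcc] at h0_notMem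
  rcases (h0 a left_mem_uIcc).lt_or_gt with ha | ha <;>
    rcases (h0 b right_mem_uIcc).lt_or_gt with hb | hb
  · exact div_pos_of_neg_of_neg hb ha
  · exact absurd (Or.inl ⟨ha.le, hb.le⟩) h0_notMem
  · exact absurd (Or.inr ⟨hb.le, ha.le⟩) h0_notMem
  · exact div_pos hb ha

theorem intervalIntegrable_div_of_hasDerivAt {f f' : ℝ → ℝ} {a b : ℝ}
    (hderiv : ∀ x ∈ uIcc a b, HasDerivAt f (f' x) x) (hf' : ContinuousOn f' (uIcc a b))
    (h0 : ∀ x ∈ uIcc a b, f x ≠ 0) : IntervalIntegrable (fun x => f' x / f x) volume a b :=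
  (hf'.div (fun x hx => (hderiv x hx).continuousAt.continuousWithinAt) h0).intervalIntegrable

/-- `Real.log` is `log |·|`, so `log ∘ f` is a primitive of `f' / f`; the sign of `f b / f a` comes
from the intermediate value theorem. -/
theorem exp_integral_div_eq_div_of_hasDerivAt {f f' : ℝ → ℝ} {a b : ℝ}
    (hderiv : ∀ x ∈ uIcc a b, HasDerivAt f (f' x) x) (hf' : ContinuousOn f' (uIcc a b))
    (h0 : ∀ x ∈ uIcc a b, f x ≠ 0) : exp (∫ x in a..b, f' x / f x) = f b / f a := by
  have hf : ContinuousOn f (uIcc a b) := fun x hx => (hderiv x hx).continuousAt.continuousWithinAt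
  rw [integral_eq_sub_of_hasDerivAt (fun x hx => (hderiv x hx).log (h0 x hx))
      (intervalIntegrable_div_of_hasDerivAt hderiv hf' h0), exp_sub,
    exp_log_eq_abs (h0 b right_mem_uIcc), exp_log_eq_abs (h0 a left_mem_uIcc), ← abs_div,
    abs_of_pos (hf.div_pos_of_ne_zero h0)]

noncomputable def expComb (L M a b s : ℝ) : ℝ :=
  L * exp (a * s) + M * exp (b * s)

theorem hasDerivAt_expComb (L M a b s : ℝ) :
    HasDerivAt (expComb L M a b) (expComb (L * a) (M * b) a b s) s := by
  have hexp (k : ℝ) : HasDerivAt (fun t => exp (k * t)) (exp (k * s) * k) s := by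
    simpa using ((hasDerivAt_id s).const_mul k).exp
  exact (((hexp a).const_mul L).add ((hexp b).const_mul M)).congr_deriv
    (by simp only [expComb]; ring)

theorem continuous_expComb (L M a b : ℝ) : Continuous (expComb L M a b) := by
  unfold expComb; fun_prop

theorem xChar_eq_expComb (r d L M s : ℝ) :
    xChar r d L M s = expComb (L * r) (M * d) r d s / (d * (expComb L M r d s + 1)) := rfl

theorem yChar_eq_expComb (r d L M s : ℝ) :
    yChar r d L M s = expComb (L * r) (M * d) r d s / (d * (expComb L M r d s - 1)) := rfl

theorem Rfun_xChar_yChar {r d L M s : ℝ} (hd : d ≠ 0) (hB : expComb (L * r) (M * d) r d s ≠ 0)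
    (hAsub : expComb L M r d s - 1 ≠ 0) (hAadd : expComb L M r d s + 1 ≠ 0) :
    Rfun r d (xChar r d L M s) (yChar r d L M s)
      = r + d - expComb (L * r * r) (M * d * d) r d s / expComb (L * r) (M * d) r d s
        - expComb (L * r) (M * d) r d s / (expComb L M r d s - 1)
        - expComb (L * r) (M * d) r d s / (expComb L M r d s + 1) := by
  have hB' : expComb (L * r * r) (M * d * d) r d s
      = (r + d) * expComb (L * r) (M * d) r d s - r * d * expComb L M r d s := by
    simp only [expComb]; ring
  rw [xChar_eq_expComb, yChar_eq_expComb, Rfun, hB']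
  generalize expComb (L * r) (M * d) r d s = B at *
  generalize expComb L M r d s = A at *
  field_simp
  ring

theorem exp_integral_Rfun_xChar_yChar {r d L M u : ℝ} (hd : d ≠ 0)
    (hB : ∀ s ∈ uIcc 0 u, expComb (L * r) (M * d) r d s ≠ 0)
    (hAsub : ∀ s ∈ uIcc 0 u, expComb L M r d s - 1 ≠ 0)
    (hAadd : ∀ s ∈ uIcc 0 u, expComb L M r d s + 1 ≠ 0) :
    exp (∫ s in (0 : ℝ)..u, Rfun r d (xChar r d L M s) (yChar r d L M s))
      = (expComb L M r d 0 - 1) / (expComb L M r d u - 1)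
        * ((expComb L M r d 0 + 1) / (expComb L M r d u + 1))
        * (expComb (L * r) (M * d) r d 0 / expComb (L * r) (M * d) r d u)
        * exp ((r + d) * u) := by
  have hderivB (s : ℝ) (_ : s ∈ uIcc 0 u) := hasDerivAt_expComb (L * r) (M * d) r d s
  have hderivAsub (s : ℝ) (_ : s ∈ uIcc 0 u) := (hasDerivAt_expComb L M r d s).sub_const 1
  have hderivAadd (s : ℝ) (_ : s ∈ uIcc 0 u) := (hasDerivAt_expComb L M r d s).add_const 1
  have hcont (L' M' : ℝ) := (continuous_expComb L' M' r d).continuousOn (s := uIcc 0 u)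
  have iB := intervalIntegrable_div_of_hasDerivAt hderivB (hcont _ _) hB
  have iAsub := intervalIntegrable_div_of_hasDerivAt hderivAsub (hcont _ _) hAsub
  have iAadd := intervalIntegrable_div_of_hasDerivAt hderivAadd (hcont _ _) hAadd
  rw [integral_congr fun s hs => Rfun_xChar_yChar hd (hB s hs) (hAsub s hs) (hAadd s hs),
    integral_sub ((intervalIntegrable_const.sub iB).sub iAsub) iAadd,
    integral_sub (intervalIntegrable_const.sub iB) iAsub, integral_sub intervalIntegrable_const iB,
    intervalIntegral.integral_const, sub_zero, smul_eq_mul, exp_sub, exp_sub, exp_sub,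
    exp_integral_div_eq_div_of_hasDerivAt hderivB (hcont _ _) hB,
    exp_integral_div_eq_div_of_hasDerivAt hderivAsub (hcont _ _) hAsub,
    exp_integral_div_eq_div_of_hasDerivAt hderivAadd (hcont _ _) hAadd]
  rw [mul_comm u]
  simp only [div_div_eq_mul_div]
  ring

theorem expComb_ratios_eq_div {r d L M u : ℝ} (hd : d ≠ 0) (hM : M ≠ 0) :
    (expComb L M r d 0 - 1) / (expComb L M r d u - 1)
        * ((expComb L M r d 0 + 1) / (expComb L M r d u + 1))
        * (expComb (L * r) (M * d) r d 0 / expComb (L * r) (M * d) r d u)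
      = (L / M + 1 - 1 / M) / (L / M * exp (r * u) + exp (d * u) - 1 / M)
        * ((L / M + 1 + 1 / M) / (L / M * exp (r * u) + exp (d * u) + 1 / M))
        * ((r / d * (L / M) + 1) / (r / d * (L / M) * exp (r * u) + exp (d * u))) := by
  simp only [expComb, mul_zero, exp_zero, mul_one]
  rw [← div_div_div_cancel_right₀ hM (L + M - 1), ← div_div_div_cancel_right₀ hM (L + M + 1),
    ← div_div_div_cancel_right₀ (mul_ne_zero hd hM) (L * r + M * d)]
  congr 3 <;> field_simp

theorem abs_sub_lt_add_sub_two_mul_mul {x y : ℝ} (hx : x ∈ Ioo (0 : ℝ) 1)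
    (hy : y ∈ Ioo (0 : ℝ) 1) : |x - y| < x + y - 2 * x * y :=
  abs_sub_lt_iff.2 ⟨by nlinarith [hx.1, hx.2, hy.1, hy.2], by nlinarith [hx.1, hx.2, hy.1, hy.2]⟩

section Parameters

variable {r d x₀ y₀ : ℝ}

theorem sub_mul_sub_mul_lamOf (hne : x₀ ≠ y₀) (hrd : d ≠ r) :
    (x₀ - y₀) * (r - d) * lamOf r d x₀ y₀ = -(d * (x₀ + y₀ - 2 * x₀ * y₀)) := by
  have := sub_ne_zero.2 hne; have := sub_ne_zero.2 hrd.symm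
  unfold lamOf; field_simp; ring

theorem sub_mul_sub_mul_muOf (hne : x₀ ≠ y₀) (hrd : d ≠ r) :
    (x₀ - y₀) * (r - d) * muOf r d x₀ y₀ = r * (x₀ + y₀) - 2 * d * x₀ * y₀ := by
  have := sub_ne_zero.2 hne; have := sub_ne_zero.2 hrd.symm
  unfold muOf; field_simp; ring

theorem mul_abs_sub_lt (hr : 0 < r) (hdr : d ≤ r) (hx₀ : x₀ ∈ Ioo (0 : ℝ) 1)
    (hy₀ : y₀ ∈ Ioo (0 : ℝ) 1) : r * |x₀ - y₀| < r * (x₀ + y₀) - 2 * d * x₀ * y₀ := by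
  nlinarith [abs_sub_lt_add_sub_two_mul_mul hx₀ hy₀, mul_pos hx₀.1 hy₀.1]

theorem mul_add_sub_two_mul_mul_pos (hr : 0 < r) (hdr : d ≤ r) (hx₀ : x₀ ∈ Ioo (0 : ℝ) 1)
    (hy₀ : y₀ ∈ Ioo (0 : ℝ) 1) : 0 < r * (x₀ + y₀) - 2 * d * x₀ * y₀ :=
  (mul_nonneg hr.le (abs_nonneg _)).trans_lt (mul_abs_sub_lt hr hdr hx₀ hy₀)

theorem muOf_ne_zero (hd : 0 < d) (hrd : d < r) (hx₀ : x₀ ∈ Ioo (0 : ℝ) 1)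
    (hy₀ : y₀ ∈ Ioo (0 : ℝ) 1) (hne : x₀ ≠ y₀) : muOf r d x₀ y₀ ≠ 0 := by
  have hmu := sub_mul_sub_mul_muOf hne hrd.ne
  intro h
  rw [h, mul_zero] at hmu
  exact (mul_add_sub_two_mul_mul_pos (hd.trans hrd) hrd.le hx₀ hy₀).ne hmu

theorem mul_exp_lt_of_lt_s0Of (hd : 0 < d) (hrd : d < r) (hx₀ : x₀ ∈ Ioo (0 : ℝ) 1)
    (hy₀ : y₀ ∈ Ioo (0 : ℝ) 1) {s : ℝ} (hs : s < s0Of r d x₀ y₀) :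
    r * (x₀ + y₀ - 2 * x₀ * y₀) * exp (r * s)
      < (r * (x₀ + y₀) - 2 * d * x₀ * y₀) * exp (d * s) := by
  have hr : 0 < r := hd.trans hrd
  have hQ : 0 < x₀ + y₀ - 2 * x₀ * y₀ :=
    (abs_nonneg _).trans_lt (abs_sub_lt_add_sub_two_mul_mul hx₀ hy₀)
  have hQ'eq : x₀ + y₀ - 2 * (d / r) * x₀ * y₀ = (r * (x₀ + y₀) - 2 * d * x₀ * y₀) / r := by
    field_simp
  have hQ' : 0 < x₀ + y₀ - 2 * (d / r) * x₀ * y₀ := by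
    rw [hQ'eq]; exact div_pos (mul_add_sub_two_mul_mul_pos hr hrd.le hx₀ hy₀) hr
  have hlog := (lt_div_iff_of_neg (sub_neg.2 hrd)).1 hs
  rw [log_lt_iff_lt_exp (div_pos hQ hQ'), div_lt_iff₀ hQ'] at hlog
  calc r * (x₀ + y₀ - 2 * x₀ * y₀) * exp (r * s)
      < r * (exp (s * (d - r)) * (x₀ + y₀ - 2 * (d / r) * x₀ * y₀)) * exp (r * s) := by
        gcongr
    _ = (r * (x₀ + y₀) - 2 * d * x₀ * y₀) * exp (d * s) := by
      rw [hQ'eq, show d * s = s * (d - r) + r * s by ring, exp_add]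
      field_simp

theorem sub_mul_expComb_lamOf_muOf_pos (hd : 0 < d) (hrd : d < r) (hx₀ : x₀ ∈ Ioo (0 : ℝ) 1)
    (hy₀ : y₀ ∈ Ioo (0 : ℝ) 1) (hne : x₀ ≠ y₀) {s : ℝ} (hs : s < s0Of r d x₀ y₀) :
    0 < (x₀ - y₀) * expComb (lamOf r d x₀ y₀ * r) (muOf r d x₀ y₀ * d) r d s := by
  have hB : (r - d) * ((x₀ - y₀) * expComb (lamOf r d x₀ y₀ * r) (muOf r d x₀ y₀ * d) r d s)
      = d * ((r * (x₀ + y₀) - 2 * d * x₀ * y₀) * exp (d * s)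
        - r * (x₀ + y₀ - 2 * x₀ * y₀) * exp (r * s)) := by
    simp only [expComb]
    linear_combination (r * exp (r * s)) * sub_mul_sub_mul_lamOf hne hrd.ne
      + (d * exp (d * s)) * sub_mul_sub_mul_muOf hne hrd.ne
  exact pos_of_mul_pos_right
    (hB ▸ mul_pos hd (sub_pos.2 (mul_exp_lt_of_lt_s0Of hd hrd hx₀ hy₀ hs))) (sub_pos.2 hrd).le

theorem abs_sub_lt_sub_mul_expComb_lamOf_muOf (hd : 0 < d) (hrd : d < r)
    (hx₀ : x₀ ∈ Ioo (0 : ℝ) 1) (hy₀ : y₀ ∈ Ioo (0 : ℝ) 1) (hne : x₀ ≠ y₀) {s : ℝ} (hs₀ : 0 ≤ s)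
    (hs : s < s0Of r d x₀ y₀) :
    |x₀ - y₀| < (x₀ - y₀) * expComb (lamOf r d x₀ y₀) (muOf r d x₀ y₀) r d s := by
  have hr : 0 < r := hd.trans hrd
  have hrd' : 0 < r - d := sub_pos.2 hrd
  have hP := mul_abs_sub_lt hr hrd.le hx₀ hy₀
  have hPexp : r * |x₀ - y₀| < (r * (x₀ + y₀) - 2 * d * x₀ * y₀) * exp (d * s) :=
    hP.trans_le (le_mul_of_one_le_right (mul_add_sub_two_mul_mul_pos hr hrd.le hx₀ hy₀).le
      (one_le_exp (mul_nonneg hd.le hs₀)))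
  have hA : (r - d) * (r * ((x₀ - y₀) * expComb (lamOf r d x₀ y₀) (muOf r d x₀ y₀) r d s
        - |x₀ - y₀|))
      = d * ((r * (x₀ + y₀) - 2 * d * x₀ * y₀) * exp (d * s)
          - r * (x₀ + y₀ - 2 * x₀ * y₀) * exp (r * s))
        + (r - d) * ((r * (x₀ + y₀) - 2 * d * x₀ * y₀) * exp (d * s) - r * |x₀ - y₀|) := by
    simp only [expComb]
    linear_combination (r * exp (r * s)) * sub_mul_sub_mul_lamOf hne hrd.ne
      + (r * exp (d * s)) * sub_mul_sub_mul_muOf hne hrd.ne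
  have hpos := hA ▸ add_pos (mul_pos hd (sub_pos.2 (mul_exp_lt_of_lt_s0Of hd hrd hx₀ hy₀ hs)))
    (mul_pos hrd' (sub_pos.2 hPexp))
  exact sub_pos.1 (pos_of_mul_pos_right (pos_of_mul_pos_right hpos hrd'.le) hr.le)

theorem expComb_lamOf_muOf_ne_zero (hd : 0 < d) (hrd : d < r) (hx₀ : x₀ ∈ Ioo (0 : ℝ) 1)
    (hy₀ : y₀ ∈ Ioo (0 : ℝ) 1) (hne : x₀ ≠ y₀) {s : ℝ} (hs₀ : 0 ≤ s) (hs : s < s0Of r d x₀ y₀) :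
    expComb (lamOf r d x₀ y₀ * r) (muOf r d x₀ y₀ * d) r d s ≠ 0 ∧
      expComb (lamOf r d x₀ y₀) (muOf r d x₀ y₀) r d s - 1 ≠ 0 ∧
      expComb (lamOf r d x₀ y₀) (muOf r d x₀ y₀) r d s + 1 ≠ 0 := by
  have hA := abs_sub_lt_sub_mul_expComb_lamOf_muOf hd hrd hx₀ hy₀ hne hs₀ hs
  refine ⟨right_ne_zero_of_mul (sub_mul_expComb_lamOf_muOf_pos hd hrd hx₀ hy₀ hne hs).ne',
    fun h => ?_, fun h => ?_⟩
  · rw [sub_eq_zero.1 h] at hA; linarith [le_abs_self (x₀ - y₀)]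
  · rw [eq_neg_of_add_eq_zero_left h] at hA; linarith [neg_abs_le (x₀ - y₀)]

end Parameters

/-- the closed form of `exp(∫₀^u R(x_α,y_α)dα)` along the characteristic
curves, for `u ∈ [0, s₀)`. -/
theorem exp_integral_R_closed_form (r d x₀ y₀ : ℝ) (hd : 0 < d) (hrd : d < r)
    (hx₀ : x₀ ∈ Set.Ioo (0 : ℝ) 1) (hy₀ : y₀ ∈ Set.Ioo (0 : ℝ) 1) (hne : x₀ ≠ y₀)
    (X Y : ℝ → ℝ)
    (hX : X = fun s => xChar r d (lamOf r d x₀ y₀) (muOf r d x₀ y₀) s)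
    (hY : Y = fun s => yChar r d (lamOf r d x₀ y₀) (muOf r d x₀ y₀) s)
    (lam mu : ℝ) (hlam : lam = lamOf r d x₀ y₀) (hmu : mu = muOf r d x₀ y₀) :
    mu ≠ 0 ∧
    ∀ u ∈ Set.Ico (0 : ℝ) (s0Of r d x₀ y₀),
      Real.exp (∫ α in (0 : ℝ)..u, Rfun r d (X α) (Y α))
        = (lam / mu + 1 - 1 / mu)
              / (lam / mu * Real.exp (r * u) + Real.exp (d * u) - 1 / mu)
            * ((lam / mu + 1 + 1 / mu)
              / (lam / mu * Real.exp (r * u) + Real.exp (d * u) + 1 / mu))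
            * ((r / d * (lam / mu) + 1)
              / (r / d * (lam / mu) * Real.exp (r * u) + Real.exp (d * u)))
            * Real.exp ((r + d) * u) := by
  subst hX hY hlam hmu
  have hmu := muOf_ne_zero hd hrd hx₀ hy₀ hne
  refine ⟨hmu, fun u ⟨hu₀, hu⟩ => ?_⟩
  have hne_zero (s : ℝ) (hs : s ∈ uIcc 0 u) := by
    rw [uIcc_of_le hu₀] at hs
    exact expComb_lamOf_muOf_ne_zero hd hrd hx₀ hy₀ hne hs.1 (hs.2.trans_lt hu)
  rw [exp_integral_Rfun_xChar_yChar hd.ne' (fun s hs => (hne_zero s hs).1)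
    (fun s hs => (hne_zero s hs).2.1) (fun s hs => (hne_zero s hs).2.2),
    expComb_ratios_eq_div hd.ne' hmu]
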